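/- Let G be a graph with girth at least 7 containing a path s_1 u_1 v u_2 s_2 such that s_1 and s_2 are support vertices and, for each i ∈ {1,2}, the vertex u_i is the only neighbor of s_i having degree at least 2. Then G has two maximal open packings of different cardinalities. -/

import Mathlib

open SimpleGraph

/-- The open neighborhood graph of `G`: distinct vertices are adjacent iff they have a
common neighbor in `G`. -/
def ong {V : Type*} (G : SimpleGraph V) : SimpleGraph V where
  Adj u v := u ≠ v ∧ ∃ w, G.Adj u w ∧ G.Adj v w
  symm := ⟨by rintro u v ⟨h, w, h1, h2⟩; exact ⟨h.symm, w, h2, h1⟩⟩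
  loopless := ⟨by rintro u ⟨h, -⟩; exact h rfl⟩

/-- A set of vertices is an open packing if no two distinct members have a common neighbor. -/
def IsOpenPacking {V : Type*} (G : SimpleGraph V) (P : Set V) : Prop :=
  ∀ ⦃u⦄, u ∈ P → ∀ ⦃v⦄, v ∈ P → u ≠ v → ∀ w, ¬(G.Adj u w ∧ G.Adj v w)

/-- An independent set of vertices. -/
def IsIndep {V : Type*} (G : SimpleGraph V) (s : Set V) : Prop :=
  s.Pairwise fun u v => ¬ G.Adj u v

/-- All maximal open packings of `G` have the same cardinality. -/
def InU {V : Type*} (G : SimpleGraph V) : Prop :=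
  ∀ P Q : Set V, Maximal (IsOpenPacking G) P → Maximal (IsOpenPacking G) Q →
    P.ncard = Q.ncard

/-- All maximal independent sets of `G` have the same cardinality. -/
def WellCovered {V : Type*} (G : SimpleGraph V) : Prop :=
  ∀ P Q : Set V, Maximal (IsIndep G) P → Maximal (IsIndep G) Q → P.ncard = Q.ncard

/-- A leaf is a vertex with exactly one neighbor. -/
def IsLeaf {V : Type*} (G : SimpleGraph V) (v : V) : Prop :=
  ∃ u, G.neighborSet v = {u}

/-- A support vertex is one adjacent to a leaf. -/
def IsSupport {V : Type*} (G : SimpleGraph V) (s : V) : Prop :=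
  ∃ l, G.neighborSet l = {s}

/-!
Let `Q` be a maximal open packing containing `v`. Every neighbour of `s_i` other than `u_i` is a
leaf hanging at `s_i`, so a common neighbour of `s_i` and some `q ∈ Q \ {v}` is either `u_i`
(impossible: `q` and `v` would share `u_i`) or forces `q = s_i` (impossible for the same reason).
Likewise `s₁` and `s₂` could only share `u₁`, which would close the 4-cycle `u₁ v u₂ s₂`. Hence
`(Q \ {v}) ∪ {s₁, s₂}` is an open packing with `|Q| + 1` elements, and any maximal open packing
containing it is larger than `Q`.
-/

lemma Set.ncard_insert_insert_diff_singleton {α : Type*} {Q : Set α} {v a b : α}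
    (hQ : Q.Finite) (hv : v ∈ Q) (ha : a ∉ Q) (hb : b ∉ Q) (hab : a ≠ b) :
    (insert a (insert b (Q \ {v}))).ncard = Q.ncard + 1 := by
  have hQv := Set.ncard_sdiff_singleton_add_one hv hQ
  rw [Set.ncard_insert_of_notMem (by simp [hab, ha]) (hQ.sdiff.insert b),
    Set.ncard_insert_of_notMem (by simp [hb]) hQ.sdiff]
  omega

section OpenPacking

open Function

variable {V : Type*} {G : SimpleGraph V} {Q : Set V} {v u s t q u₁ u₂ s₁ s₂ : V}

lemma isOpenPacking_iff_pairwise_disjoint {P : Set V} :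
    IsOpenPacking G P ↔ P.Pairwise (Disjoint on G.neighborSet) := by
  simp [IsOpenPacking, Set.Pairwise, onFun, Set.disjoint_left]

lemma not_adj_of_four_lt_egirth (hg : 4 < G.egirth) {a b c d : V} (hac : a ≠ c) (hbd : b ≠ d)
    (hab : G.Adj a b) (hbc : G.Adj b c) (hcd : G.Adj c d) : ¬ G.Adj d a := by
  intro hda
  have hcycle :
      (Walk.cons hab (Walk.cons hbc (Walk.cons hcd (Walk.cons hda Walk.nil)))).IsCycle := by
    simp [Walk.cons_isCycle_iff, hab.ne, hbc.ne, hcd.ne, hda.ne, hac, hbd, hab.ne.symm,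
      hda.ne.symm, hac.symm]
  exact (egirth_le_length hcycle).not_gt (by simpa using hg)

lemma eq_or_forall_adj_eq_of_forall_two_le_degree [G.LocallyFinite] {x : V}
    (hu : ∀ x, G.Adj s x → 2 ≤ G.degree x → x = u) (hsx : G.Adj s x) :
    x = u ∨ ∀ y, G.Adj x y → y = s := by
  refine (le_or_gt 2 (G.degree x)).imp (hu x hsx) fun hdeg y hxy => ?_
  rw [← card_neighborFinset_eq_degree] at hdeg
  exact Finset.card_le_one.mp (show (G.neighborFinset x).card ≤ 1 by omega) y
    (by simpa using hxy) s (by simpa using hsx.symm)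

lemma IsOpenPacking.notMem_of_adj (hQ : IsOpenPacking G Q) (hv : v ∈ Q) (hvu : G.Adj v u)
    (hsu : G.Adj s u) (hsv : s ≠ v) : s ∉ Q :=
  fun hs => hQ hs hv hsv u ⟨hsu, hvu⟩

lemma IsOpenPacking.disjoint_neighborSet (hQ : IsOpenPacking G Q) (hv : v ∈ Q)
    (hvu : G.Adj v u) (hsu : G.Adj s u) (hs : ∀ x, G.Adj s x → x = u ∨ ∀ y, G.Adj x y → y = s)
    (hq : q ∈ Q) (hqv : q ≠ v) : Disjoint (G.neighborSet s) (G.neighborSet q) := by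
  refine Set.disjoint_left.2 fun w (hsw : G.Adj s w) (hqw : G.Adj q w) => ?_
  rcases hs w hsw with rfl | hw
  · exact hQ hq hv hqv w ⟨hqw, hvu⟩
  · obtain rfl := hw q hqw.symm
    exact hQ hq hv hqv u ⟨hsu, hvu⟩

lemma disjoint_neighborSet_of_not_adj (hs : ∀ x, G.Adj s x → x = u ∨ ∀ y, G.Adj x y → y = s)
    (hst : s ≠ t) (hut : ¬ G.Adj u t) : Disjoint (G.neighborSet s) (G.neighborSet t) := by
  refine Set.disjoint_left.2 fun w (hsw : G.Adj s w) (htw : G.Adj t w) => ?_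
  rcases hs w hsw with rfl | hw
  · exact hut htw.symm
  · exact hst (hw t htw.symm).symm

lemma IsOpenPacking.insert_insert_diff_singleton (hQ : IsOpenPacking G Q) (hv : v ∈ Q)
    (hvu₁ : G.Adj v u₁) (hs₁u₁ : G.Adj s₁ u₁)
    (hs₁ : ∀ x, G.Adj s₁ x → x = u₁ ∨ ∀ y, G.Adj x y → y = s₁)
    (hvu₂ : G.Adj v u₂) (hs₂u₂ : G.Adj s₂ u₂)
    (hs₂ : ∀ x, G.Adj s₂ x → x = u₂ ∨ ∀ y, G.Adj x y → y = s₂)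
    (hs₁₂ : s₁ ≠ s₂) (hu₁s₂ : ¬ G.Adj u₁ s₂) :
    IsOpenPacking G (insert s₁ (insert s₂ (Q \ {v}))) := by
  have hQ' := isOpenPacking_iff_pairwise_disjoint.1 hQ
  have h₂ : ∀ q ∈ Q \ {v}, Disjoint (G.neighborSet s₂) (G.neighborSet q) :=
    fun q hq => hQ.disjoint_neighborSet hv hvu₂ hs₂u₂ hs₂ hq.1 hq.2
  have h₁ : ∀ q ∈ insert s₂ (Q \ {v}), Disjoint (G.neighborSet s₁) (G.neighborSet q) := by
    rintro q (rfl | hq)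
    · exact disjoint_neighborSet_of_not_adj hs₁ hs₁₂ hu₁s₂
    · exact hQ.disjoint_neighborSet hv hvu₁ hs₁u₁ hs₁ hq.1 hq.2
  refine isOpenPacking_iff_pairwise_disjoint.2 <|
    ((hQ'.mono Set.sdiff_subset).insert fun q hq _ => ⟨h₂ q hq, (h₂ q hq).symm⟩).insert
      fun q hq _ => ⟨h₁ q hq, (h₁ q hq).symm⟩

end OpenPacking

theorem stmt14_general {V : Type*} [Fintype V] (G : SimpleGraph V) [DecidableRel G.Adj]
    (hg : 7 ≤ G.egirth) (s₁ u₁ v u₂ s₂ : V)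
    (hnd : List.Nodup [s₁, u₁, v, u₂, s₂])
    (h1 : G.Adj s₁ u₁) (h2 : G.Adj u₁ v) (h3 : G.Adj v u₂) (h4 : G.Adj u₂ s₂)
    (hu₁ : ∀ x, G.Adj s₁ x → 2 ≤ G.degree x → x = u₁)
    (hu₂ : ∀ x, G.Adj s₂ x → 2 ≤ G.degree x → x = u₂) :
    ∃ P Q, Maximal (IsOpenPacking G) P ∧ Maximal (IsOpenPacking G) Q ∧
      P.ncard ≠ Q.ncard := by
  obtain ⟨⟨-, hs₁v, -, hs₁s₂⟩, ⟨-, hu₁u₂, -⟩, ⟨-, hvs₂⟩, -⟩ := by simpa using hnd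
  obtain ⟨Q, hQv, hQ⟩ := Finite.exists_le_maximal
    (isOpenPacking_iff_pairwise_disjoint.2 (Set.pairwise_singleton _ _) : IsOpenPacking G {v})
  have hvQ : v ∈ Q := hQv rfl
  have hu₁s₂ : ¬ G.Adj u₁ s₂ := fun h =>
    not_adj_of_four_lt_egirth (lt_of_lt_of_le (by norm_num) hg) hu₁u₂ hvs₂ h2 h3 h4 h.symm
  have hP := hQ.prop.insert_insert_diff_singleton hvQ h2.symm h1
    (fun _ => eq_or_forall_adj_eq_of_forall_two_le_degree hu₁) h3 h4.symm
    (fun _ => eq_or_forall_adj_eq_of_forall_two_le_degree hu₂) hs₁s₂ hu₁s₂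
  obtain ⟨M, hPM, hM⟩ := Finite.exists_le_maximal hP
  refine ⟨M, Q, hM, hQ, ne_of_gt ?_⟩
  calc Q.ncard < Q.ncard + 1 := lt_add_one _
    _ = (insert s₁ (insert s₂ (Q \ {v}))).ncard :=
      (Set.ncard_insert_insert_diff_singleton Q.toFinite hvQ
        (hQ.prop.notMem_of_adj hvQ h2.symm h1 hs₁v)
        (hQ.prop.notMem_of_adj hvQ h3 h4.symm (Ne.symm hvs₂)) hs₁s₂).symm
    _ ≤ M.ncard := Set.ncard_le_ncard hPM M.toFinite

theorem stmt14 {V : Type*} [Fintype V] (G : SimpleGraph V) [DecidableRel G.Adj]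
    (hg : 7 ≤ G.egirth) (s₁ u₁ v u₂ s₂ : V)
    (hnd : List.Nodup [s₁, u₁, v, u₂, s₂])
    (h1 : G.Adj s₁ u₁) (h2 : G.Adj u₁ v) (h3 : G.Adj v u₂) (h4 : G.Adj u₂ s₂)
    (hs₁ : IsSupport G s₁) (hs₂ : IsSupport G s₂)
    (hu₁ : ∀ x, G.Adj s₁ x → 2 ≤ G.degree x → x = u₁)
    (hu₂ : ∀ x, G.Adj s₂ x → 2 ≤ G.degree x → x = u₂) :
    ∃ P Q, Maximal (IsOpenPacking G) P ∧ Maximal (IsOpenPacking G) Q ∧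
      P.ncard ≠ Q.ncard :=
  stmt14_general G hg s₁ u₁ v u₂ s₂ hnd h1 h2 h3 h4 hu₁ hu₂
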